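/- arXiv:2312.13626 — 2 statements merged into one kernel-verified Lean document; each statement's English description precedes it below -/
import Mathlib

section
/- Let G be a compact quantum group with Haar state h, and for each irreducible unitary representation α with matrix coefficients U^α_{ij} (1 ≤ i,j ≤ dim α) let ρ_α be the unique positive invertible intertwiner between U^α and its double contragredient normalized so that Tr(ρ_α) = Tr(ρ_α⁻¹). Then the Schur orthogonality relations hold: h((U^β_{ik})* U^α_{jl}) = δ_{α,β} δ_{k,l} (ρ_α⁻¹)_{j,i} / Tr(ρ_α). -/
/-!
Left invariance of the Haar state makes `F = (h(U^β_{ik}* U^α_{jl}))_{kl}` an intertwiner from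
`U^α` to `U^β`, so `F = 0` for inequivalent representations, while for `α = β` Schur's lemma gives
`h(U_{ik}* U_{jl}) = δ_{kl} C_{ij}`. Right invariance then reads `Ū C Uᵀ = C`, where
`Ū = (U_{ij}*)`. The antipode inverts `Ū`: `S(Ū) Ū = 1` with `S(Ū) = S²(U)ᵀ = (ρ U ρ⁻¹)ᵀ`, so
`C ρᵀ` commutes with `Ū`; conjugating, `\overline{C ρᵀ}` commutes with `U` and is scalar, whence
`C = μ (ρ⁻¹)ᵀ`. Finally `∑ᵢ U_{ik}* U_{ik} = 1` and `h 1 = 1` give `μ Tr ρ⁻¹ = 1`.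
-/

open scoped TensorProduct ComplexOrder

open Matrix

section

variable {A : Type*} [Ring A] [Algebra ℂ A] {n m o : Type*}

namespace Matrix

theorem transpose_map_algebraMap_mul [Fintype m] (C : Matrix n m ℂ) (M : Matrix m o A) :
    (C.map (algebraMap ℂ A) * M)ᵀ = Mᵀ * Cᵀ.map (algebraMap ℂ A) := by
  ext i j
  simp only [transpose_apply, mul_apply, map_apply]
  exact Finset.sum_congr rfl fun k _ => Algebra.commutes _ _

theorem transpose_mul_map_algebraMap [Fintype n] (M : Matrix o n A) (C : Matrix n m ℂ) :
    (M * C.map (algebraMap ℂ A))ᵀ = Cᵀ.map (algebraMap ℂ A) * Mᵀ := by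
  ext i j
  simp only [transpose_apply, mul_apply, map_apply]
  exact Finset.sum_congr rfl fun k _ => (Algebra.commutes _ _).symm

theorem map_star_map_algebraMap_mul [Fintype m] [StarRing A] [StarModule ℂ A]
    (C : Matrix n m ℂ) (M : Matrix m o A) :
    (C.map (algebraMap ℂ A) * M).map star = (C.map star).map (algebraMap ℂ A) * M.map star := by
  ext i j
  simp only [mul_apply, map_apply, star_sum, star_mul, ← algebraMap_star_comm]
  exact Finset.sum_congr rfl fun k _ => (Algebra.commutes _ _).symm

theorem map_star_mul_map_algebraMap [Fintype n] [StarRing A] [StarModule ℂ A]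
    (M : Matrix o n A) (C : Matrix n m ℂ) :
    (M * C.map (algebraMap ℂ A)).map star = M.map star * (C.map star).map (algebraMap ℂ A) := by
  ext i j
  simp only [mul_apply, map_apply, star_sum, star_mul, ← algebraMap_star_comm]
  exact Finset.sum_congr rfl fun k _ => Algebra.commutes _ _

theorem map_algebraMap_map_algHom (f : A →ₐ[ℂ] ℂ) (C : Matrix n m ℂ) :
    (C.map (algebraMap ℂ A)).map f = C := by
  ext i j
  exact f.commutes _

end Matrix

def IsCorepMatrix [Fintype n] (Δ : A →ₐ[ℂ] A ⊗[ℂ] A) (V : Matrix n n A) : Prop :=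
  ∀ i j, Δ (V i j) = ∑ k, V i k ⊗ₜ[ℂ] V k j

namespace IsCorepMatrix

variable [Fintype n] {Δ : A →ₐ[ℂ] A ⊗[ℂ] A} {V : Matrix n n A}

/-- `Δ(V) = V₁₃ V₂₃` inverts to `Δ(Vᴴ) = V₂₃ᴴ V₁₃ᴴ`, which read entrywise is the claim. -/
theorem map_star [DecidableEq n] [StarRing A] (hV : IsCorepMatrix Δ V) (h₁ : V * Vᴴ = 1)
    (h₂ : Vᴴ * V = 1) :
    IsCorepMatrix Δ (V.map star) := by
  let ι₁ : A →ₐ[ℂ] A ⊗[ℂ] A := Algebra.TensorProduct.includeLeft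
  let ι₂ : A →ₐ[ℂ] A ⊗[ℂ] A := Algebra.TensorProduct.includeRight
  have hmap_inv (ι : A →ₐ[ℂ] A ⊗[ℂ] A) : V.map ι * Vᴴ.map ι = 1 := by
    rw [← Matrix.map_mul, h₁, Matrix.map_one _ (map_zero ι) (map_one ι)]
  have hΔ : V.map Δ = V.map ι₁ * V.map ι₂ := by
    ext i j
    simp [ι₁, ι₂, hV i j, mul_apply]
  have hΔ_inv : Vᴴ.map Δ = Vᴴ.map ι₂ * Vᴴ.map ι₁ := by
    refine left_inv_eq_right_inv (a := V.map Δ) ?_ ?_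
    · rw [← Matrix.map_mul, h₂, Matrix.map_one _ (map_zero Δ) (map_one Δ)]
    · rw [hΔ, mul_assoc, ← mul_assoc (V.map ι₂), hmap_inv, one_mul, hmap_inv]
  intro i j
  simpa [ι₁, ι₂, mul_apply] using congr_fun₂ hΔ_inv j i

theorem map_counit_mul {ε : A →ₐ[ℂ] ℂ}
    (counit_left : ∀ a : A,
      (TensorProduct.lid ℂ A) ((LinearMap.rTensor A ε.toLinearMap) (Δ a)) = a)
    (hV : IsCorepMatrix Δ V) :
    (V.map ε).map (algebraMap ℂ A) * V = V := by
  ext i j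
  simpa [hV i j, mul_apply, Algebra.smul_def] using counit_left (V i j)

theorem map_counit_eq_one [DecidableEq n] {ε : A →ₐ[ℂ] ℂ}
    (counit_left : ∀ a : A,
      (TensorProduct.lid ℂ A) ((LinearMap.rTensor A ε.toLinearMap) (Δ a)) = a)
    (hV : IsCorepMatrix Δ V) {W : Matrix n n A} (hVW : V * W = 1) :
    V.map ε = 1 := by
  have hidem : V.map ε * V.map ε = V.map ε := by
    have h := congr_arg (Matrix.map · ε) (hV.map_counit_mul counit_left)
    rwa [Matrix.map_mul, map_algebraMap_map_algHom] at h
  have hinv : V.map ε * W.map ε = 1 := by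
    rw [← Matrix.map_mul, hVW, Matrix.map_one _ (map_zero ε) (map_one ε)]
  calc V.map ε = V.map ε * (V.map ε * W.map ε) := by rw [hinv, mul_one]
    _ = 1 := by rw [← mul_assoc, hidem, hinv]

/-- Conjugating `ε(Ū) Ū = Ū` entrywise gives `conj(ε(Ū)) V = V`, to which we apply `ε`. -/
theorem map_star_map_counit_eq_one [DecidableEq n] [StarRing A] [StarModule ℂ A]
    {ε : A →ₐ[ℂ] ℂ}
    (counit_left : ∀ a : A,
      (TensorProduct.lid ℂ A) ((LinearMap.rTensor A ε.toLinearMap) (Δ a)) = a)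
    (hVbar : IsCorepMatrix Δ (V.map star)) (hε : V.map ε = 1) :
    (V.map star).map ε = 1 := by
  have h := congr_arg (Matrix.map · star) (hVbar.map_counit_mul counit_left)
  have hVV : (V.map star).map star = V := by ext; simp
  rw [map_star_map_algebraMap_mul, hVV] at h
  have h' := congr_arg (Matrix.map · ε) h
  rw [Matrix.map_mul, map_algebraMap_map_algHom, hε, mul_one] at h'
  calc (V.map star).map ε = (((V.map star).map ε).map star).map star := by ext; simp
    _ = 1 := by rw [h', Matrix.map_one _ (star_zero _) (star_one _)]

theorem map_antipode_mul [DecidableEq n] {ε : A →ₐ[ℂ] ℂ} {S : A →ₗ[ℂ] A}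
    (antipode_left : ∀ a : A,
      (LinearMap.mul' ℂ A) ((LinearMap.rTensor A S) (Δ a)) = ε a • (1 : A))
    (hV : IsCorepMatrix Δ V) (hε : V.map ε = 1) :
    V.map S * V = 1 := by
  ext i j
  have hεij : ε (V i j) = (1 : Matrix n n ℂ) i j := congr_fun₂ hε i j
  have := antipode_left (V i j)
  simp only [hV i j, map_sum, LinearMap.rTensor_tmul, LinearMap.mul'_apply, hεij] at this
  simpa [mul_apply, one_apply, ite_smul] using this

theorem comul_mul [Fintype m] {X : Matrix n n A} {Y : Matrix m m A} (hX : IsCorepMatrix Δ X)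
    (hY : IsCorepMatrix Δ Y) (i k : n) (j l : m) :
    Δ (X i k * Y j l) = ∑ p, ∑ q, (X i p * Y j q) ⊗ₜ[ℂ] (X p k * Y q l) := by
  rw [map_mul, hX, hY, Finset.sum_mul_sum]
  simp only [Algebra.TensorProduct.tmul_mul_tmul]

end IsCorepMatrix

def haarCoeffMatrix [StarRing A] (h : A →ₗ[ℂ] ℂ) (V : Matrix n n A) (W : Matrix m m A) (i : n)
    (j : m) : Matrix n m ℂ :=
  Matrix.of fun k l => h (star (V i k) * W j l)

section Haar

variable [StarRing A] {Δ : A →ₐ[ℂ] A ⊗[ℂ] A} {h : A →ₗ[ℂ] ℂ}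

theorem mul_haarCoeffMatrix [Fintype n] [Fintype m] [DecidableEq n]
    (hinv_left : ∀ a : A,
      (TensorProduct.lid ℂ A) ((LinearMap.rTensor A h) (Δ a)) = h a • (1 : A))
    {V : Matrix n n A} {W : Matrix m m A} (hVbar : IsCorepMatrix Δ (V.map star))
    (hW : IsCorepMatrix Δ W) (hV₁ : V * Vᴴ = 1) (i : n) (j : m) :
    V * (haarCoeffMatrix h V W i j).map (algebraMap ℂ A) =
      (haarCoeffMatrix h V W i j).map (algebraMap ℂ A) * W := by
  set F := (haarCoeffMatrix h V W i j).map (algebraMap ℂ A)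
  have hinv : Vᴴ * F * W = F := by
    ext k l
    have hinv_kl := hinv_left ((V.map star) i k * W j l)
    rw [hVbar.comul_mul hW] at hinv_kl
    simp only [map_sum, LinearMap.rTensor_tmul, TensorProduct.lid_tmul, map_apply] at hinv_kl
    simp only [F, haarCoeffMatrix, mul_apply, map_apply, of_apply, conjTranspose_apply,
      Finset.sum_mul, ← hinv_kl, Algebra.algebraMap_eq_smul_one]
    rw [Finset.sum_comm]
    refine Finset.sum_congr rfl fun p _ => Finset.sum_congr rfl fun q _ => ?_
    rw [mul_smul_comm, mul_one, smul_mul_assoc]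
  calc V * F = V * (Vᴴ * F * W) := by rw [hinv]
    _ = F * W := by rw [← Matrix.mul_assoc, ← Matrix.mul_assoc, hV₁, Matrix.one_mul]

theorem map_star_mul_mul_transpose [Fintype n] [DecidableEq n] [Nonempty n]
    (hinv_right : ∀ a : A,
      (TensorProduct.rid ℂ A) ((LinearMap.lTensor A h) (Δ a)) = h a • (1 : A))
    {V : Matrix n n A} (hV : IsCorepMatrix Δ V) (hVbar : IsCorepMatrix Δ (V.map star))
    {C : Matrix n n ℂ} (hC : ∀ i j, haarCoeffMatrix h V V i j = C i j • (1 : Matrix n n ℂ)) :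
    V.map star * C.map (algebraMap ℂ A) * Vᵀ = C.map (algebraMap ℂ A) := by
  obtain ⟨k⟩ := ‹Nonempty n›
  ext i j
  have hinv_ij := hinv_right ((V.map star) i k * V j k)
  rw [hVbar.comul_mul hV] at hinv_ij
  simp only [map_sum, LinearMap.lTensor_tmul, TensorProduct.rid_tmul, map_apply] at hinv_ij
  have hCe (i j k l) : h (star (V i k) * V j l) = C i j * (1 : Matrix n n ℂ) k l :=
    congr_fun₂ (hC i j) k l
  simp only [hCe, one_apply_eq, mul_one] at hinv_ij
  simp only [mul_apply, map_apply, transpose_apply, Finset.sum_mul, ← hinv_ij,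
    Algebra.algebraMap_eq_smul_one]
  rw [Finset.sum_comm]
  refine Finset.sum_congr rfl fun p _ => Finset.sum_congr rfl fun q _ => ?_
  rw [mul_smul_comm, mul_one, smul_mul_assoc]

theorem trace_eq_one_of_haarCoeffMatrix_eq [Fintype n] [DecidableEq n] [Nonempty n]
    (hone : h 1 = 1) {V : Matrix n n A} (hV₂ : Vᴴ * V = 1) {C : Matrix n n ℂ}
    (hC : ∀ i j, haarCoeffMatrix h V V i j = C i j • (1 : Matrix n n ℂ)) :
    C.trace = 1 := by
  obtain ⟨k⟩ := ‹Nonempty n›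
  calc C.trace = h ((Vᴴ * V) k k) := by
        simp only [trace, diag, mul_apply, conjTranspose_apply, map_sum]
        refine Finset.sum_congr rfl fun i _ => ?_
        simpa [haarCoeffMatrix] using (congr_fun₂ (hC i i) k k).symm
    _ = 1 := by rw [hV₂, one_apply_eq, hone]

end Haar

theorem commute_mul_of_mul_mul_eq_self {M : Type*} [Monoid M] {u v c p q : M}
    (hpq : p * q = 1) (hinv : q * v * p * u = 1) (hrel : u * c * v = c) : Commute u (c * p) :=
  calc u * (c * p) = u * c * p * (q * v * p * u) := by rw [hinv, mul_one, mul_assoc]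
    _ = u * c * (p * q) * v * p * u := by simp only [mul_assoc]
    _ = c * p * u := by rw [hpq, mul_one, hrel]

section Contragredient

variable [StarRing A] [Fintype n] [DecidableEq n]

theorem map_star_map_eq_transpose {S : A → A} {V : Matrix n n A} (hS : V.map S = Vᴴ)
    {ρ ρ' : Matrix n n ℂ} (hρ : ρ * ρ' = 1)
    (hint : (V.map fun a => S (S a)) * ρ.map (algebraMap ℂ A) = ρ.map (algebraMap ℂ A) * V) :
    (V.map star).map S = ρ'ᵀ.map (algebraMap ℂ A) * Vᵀ * ρᵀ.map (algebraMap ℂ A) := by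
  have hS2 : V.map (fun a => S (S a)) = ρ.map (algebraMap ℂ A) * V * ρ'.map (algebraMap ℂ A) := by
    calc V.map (fun a => S (S a))
        = V.map (fun a => S (S a)) * (ρ * ρ').map (algebraMap ℂ A) := by
          rw [hρ, Matrix.map_one _ (map_zero _) (map_one _), mul_one]
      _ = ρ.map (algebraMap ℂ A) * V * ρ'.map (algebraMap ℂ A) := by
          rw [Matrix.map_mul, ← mul_assoc, hint]
  calc (V.map star).map S = (Vᴴ.map S)ᵀ := rfl
    _ = ρ'ᵀ.map (algebraMap ℂ A) * Vᵀ * ρᵀ.map (algebraMap ℂ A) := by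
      rw [← hS, Matrix.map_map, Function.comp_def, hS2, transpose_mul_map_algebraMap,
        transpose_map_algebraMap_mul, Matrix.mul_assoc]

theorem exists_eq_smul_one_of_commute_map_star [StarModule ℂ A] {V : Matrix n n A}
    (hirred : ∀ T : Matrix n n ℂ, T.map (algebraMap ℂ A) * V = V * T.map (algebraMap ℂ A) →
      ∃ c : ℂ, T = c • (1 : Matrix n n ℂ))
    {K : Matrix n n ℂ} (hK : Commute (V.map star) (K.map (algebraMap ℂ A))) :
    ∃ c : ℂ, K = c • (1 : Matrix n n ℂ) := by
  have hVV : (V.map star).map star = V := by ext; simp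
  have hK' := congr_arg (Matrix.map · star) hK.eq
  simp only [map_star_mul_map_algebraMap, map_star_map_algebraMap_mul, hVV] at hK'
  obtain ⟨c, hc⟩ := hirred _ hK'.symm
  refine ⟨star c, ?_⟩
  calc K = (K.map star).map star := by ext; simp
    _ = star c • (1 : Matrix n n ℂ) := by
      rw [hc]; ext i j; by_cases hij : i = j <;> simp [hij, one_apply]

end Contragredient

theorem haarCoeffMatrix_eq_of_irreducible [StarRing A] [StarModule ℂ A]
    [Fintype n] [DecidableEq n] [Nonempty n]
    {Δ : A →ₐ[ℂ] A ⊗[ℂ] A} {ε : A →ₐ[ℂ] ℂ} {S : A →ₗ[ℂ] A} {h : A →ₗ[ℂ] ℂ}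
    (counit_left : ∀ a : A,
      (TensorProduct.lid ℂ A) ((LinearMap.rTensor A ε.toLinearMap) (Δ a)) = a)
    (antipode_left : ∀ a : A,
      (LinearMap.mul' ℂ A) ((LinearMap.rTensor A S) (Δ a)) = ε a • (1 : A))
    (hone : h 1 = 1)
    (hinv_left : ∀ a : A,
      (TensorProduct.lid ℂ A) ((LinearMap.rTensor A h) (Δ a)) = h a • (1 : A))
    (hinv_right : ∀ a : A,
      (TensorProduct.rid ℂ A) ((LinearMap.lTensor A h) (Δ a)) = h a • (1 : A))
    {V : Matrix n n A} (hV₁ : V * Vᴴ = 1) (hV₂ : Vᴴ * V = 1) (hV : IsCorepMatrix Δ V)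
    (hirred : ∀ T : Matrix n n ℂ, T.map (algebraMap ℂ A) * V = V * T.map (algebraMap ℂ A) →
      ∃ c : ℂ, T = c • (1 : Matrix n n ℂ))
    {ρ : Matrix n n ℂ} (hρ : IsUnit ρ.det)
    (hint : (V.map fun a => S (S a)) * ρ.map (algebraMap ℂ A) = ρ.map (algebraMap ℂ A) * V)
    (i j : n) :
    haarCoeffMatrix h V V i j = (ρ⁻¹ j i / ρ⁻¹.trace) • (1 : Matrix n n ℂ) := by
  have hVbar := hV.map_star hV₁ hV₂
  obtain ⟨C, hC⟩ : ∃ C : Matrix n n ℂ, ∀ i j, haarCoeffMatrix h V V i j = C i j • 1 := by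
    choose C hC using fun i j => hirred _ (mul_haarCoeffMatrix hinv_left hVbar hV hV₁ i j).symm
    exact ⟨C, hC⟩
  have hε := hV.map_counit_eq_one counit_left hV₁
  have hS : V.map S = Vᴴ := left_inv_eq_right_inv (hV.map_antipode_mul antipode_left hε) hV₁
  have hSbar := hVbar.map_antipode_mul antipode_left
    (IsCorepMatrix.map_star_map_counit_eq_one counit_left hVbar hε)
  rw [map_star_map_eq_transpose hS (mul_nonsing_inv ρ hρ) hint] at hSbar
  have hρT : ρᵀ.map (algebraMap ℂ A) * ρ⁻¹ᵀ.map (algebraMap ℂ A) = 1 := by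
    rw [← Matrix.map_mul, ← transpose_mul, nonsing_inv_mul ρ hρ, transpose_one,
      Matrix.map_one _ (map_zero _) (map_one _)]
  have hcomm := commute_mul_of_mul_mul_eq_self hρT hSbar
    (map_star_mul_mul_transpose hinv_right hV hVbar hC)
  rw [← Matrix.map_mul] at hcomm
  obtain ⟨μ, hμ⟩ := exists_eq_smul_one_of_commute_map_star hirred hcomm
  have hCμ : C = μ • ρ⁻¹ᵀ := by
    calc C = C * ρᵀ * ρ⁻¹ᵀ := by
          rw [Matrix.mul_assoc, ← transpose_mul, nonsing_inv_mul ρ hρ, transpose_one, mul_one]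
      _ = μ • ρ⁻¹ᵀ := by rw [hμ, smul_mul_assoc, one_mul]
  have hμtr : μ * ρ⁻¹.trace = 1 := by
    rw [← trace_eq_one_of_haarCoeffMatrix_eq hone hV₂ hC, hCμ, trace_smul, trace_transpose,
      smul_eq_mul]
  have hμ_eq : μ = 1 / ρ⁻¹.trace := eq_one_div_of_mul_eq_one_left hμtr
  rw [hC, hCμ, Matrix.smul_apply, transpose_apply, smul_eq_mul, hμ_eq, one_div_mul_eq_div]

end

theorem schur_orthogonality_compact_quantum_group_general
    {A : Type*} [Ring A] [Algebra ℂ A] [StarRing A] [StarModule ℂ A]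
    (Δ : A →ₐ[ℂ] A ⊗[ℂ] A)
    (ε : A →ₐ[ℂ] ℂ)
    (counit_left : ∀ a : A,
      (TensorProduct.lid ℂ A) ((LinearMap.rTensor A ε.toLinearMap) (Δ a)) = a)
    (S : A →ₗ[ℂ] A)
    (antipode_left : ∀ a : A,
      (LinearMap.mul' ℂ A) ((LinearMap.rTensor A S) (Δ a)) = ε a • (1 : A))
    -- the Haar state: a bi-invariant state
    (h : A →ₗ[ℂ] ℂ) (hone : h 1 = 1)
    (hinv_left : ∀ a : A,
      (TensorProduct.lid ℂ A) ((LinearMap.rTensor A h) (Δ a)) = h a • (1 : A))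
    (hinv_right : ∀ a : A,
      (TensorProduct.rid ℂ A) ((LinearMap.lTensor A h) (Δ a)) = h a • (1 : A))
    -- the irreducible unitary representations
    {I : Type*} (d : I → ℕ)
    (U : ∀ α : I, Matrix (Fin (d α)) (Fin (d α)) A)
    (hunitary : ∀ α, U α * (U α).conjTranspose = 1 ∧ (U α).conjTranspose * U α = 1)
    (hcorep : ∀ α (i j : Fin (d α)),
      Δ (U α i j) = ∑ k : Fin (d α), U α i k ⊗ₜ[ℂ] U α k j)
    (hirred : ∀ α (T : Matrix (Fin (d α)) (Fin (d α)) ℂ),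
      T.map (algebraMap ℂ A) * U α = U α * T.map (algebraMap ℂ A) →
        ∃ c : ℂ, T = c • (1 : Matrix (Fin (d α)) (Fin (d α)) ℂ))
    (hinequiv : ∀ α β, α ≠ β → ∀ T : Matrix (Fin (d α)) (Fin (d β)) ℂ,
      U α * T.map (algebraMap ℂ A) = T.map (algebraMap ℂ A) * U β → T = 0)
    -- the normalised positive intertwiner between `U α` and its double contragredient
    (ρ : ∀ α : I, Matrix (Fin (d α)) (Fin (d α)) ℂ)
    (hρpos : ∀ α, (ρ α).PosDef)
    (hρtrace : ∀ α, (ρ α).trace = ((ρ α)⁻¹).trace)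
    (hρintertwine : ∀ α,
      ((U α).map fun a => S (S a)) * (ρ α).map (algebraMap ℂ A) =
        (ρ α).map (algebraMap ℂ A) * U α) :
    (∀ α β, α ≠ β → ∀ (i k : Fin (d β)) (j l : Fin (d α)),
        h (star (U β i k) * U α j l) = 0) ∧
    (∀ α (i k j l : Fin (d α)),
        h (star (U α i k) * U α j l) =
          (if k = l then 1 else 0) * ((ρ α)⁻¹ j i) / (ρ α).trace) := by
  refine ⟨fun α β hne i k j l => ?_, fun α i k j l => ?_⟩
  · have hUbar := IsCorepMatrix.map_star (hcorep β) (hunitary β).1 (hunitary β).2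
    have hF := hinequiv β α hne.symm _
      (mul_haarCoeffMatrix hinv_left hUbar (hcorep α) (hunitary β).1 i j)
    simpa [haarCoeffMatrix] using congr_fun₂ hF k l
  · have : Nonempty (Fin (d α)) := ⟨i⟩
    have hF := haarCoeffMatrix_eq_of_irreducible counit_left antipode_left hone hinv_left
      hinv_right (hunitary α).1 (hunitary α).2 (hcorep α) (hirred α)
      (isUnit_iff_ne_zero.mpr (hρpos α).det_pos.ne') (hρintertwine α) i j
    have hF := congr_fun₂ hF k l
    simp only [haarCoeffMatrix, of_apply, Matrix.smul_apply, one_apply, smul_eq_mul] at hF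
    rw [hF, ← hρtrace α]
    split_ifs <;> ring

/-- **Schur orthogonality relations for compact quantum groups.**
Let `G` be a compact quantum group, given here by its Hopf ∗-algebra of matrix coefficients:
a unital ∗-algebra `A` over `ℂ` with coassociative comultiplication `Δ`, counit `ε`,
antipode `S`, and a bi-invariant Haar state `h`.  For each irreducible unitary
representation `α` (pairwise inequivalent), with matrix of coefficients
`U α ∈ M_{d α}(A)`, let `ρ α` be the positive invertible intertwiner between `U α` and its
double contragredient `(U α).map (S ∘ S)`, normalised so that `Tr(ρ α) = Tr((ρ α)⁻¹)`.
Then the Schur orthogonality relations hold: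
`h((U^β_{ik})* U^α_{jl}) = δ_{α,β} δ_{k,l} (ρ_α⁻¹)_{j,i} / Tr(ρ_α)`. -/
theorem schur_orthogonality_compact_quantum_group
    {A : Type*} [Ring A] [Algebra ℂ A] [StarRing A] [StarModule ℂ A]
    (Δ : A →ₐ[ℂ] A ⊗[ℂ] A)
    (coassoc : ∀ a : A,
      (Algebra.TensorProduct.assoc ℂ ℂ ℂ A A A)
          ((Algebra.TensorProduct.map Δ (AlgHom.id ℂ A)) (Δ a)) =
        (Algebra.TensorProduct.map (AlgHom.id ℂ A) Δ) (Δ a))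
    (ε : A →ₐ[ℂ] ℂ)
    (counit_left : ∀ a : A,
      (TensorProduct.lid ℂ A) ((LinearMap.rTensor A ε.toLinearMap) (Δ a)) = a)
    (counit_right : ∀ a : A,
      (TensorProduct.rid ℂ A) ((LinearMap.lTensor A ε.toLinearMap) (Δ a)) = a)
    (S : A →ₗ[ℂ] A)
    (antipode_left : ∀ a : A,
      (LinearMap.mul' ℂ A) ((LinearMap.rTensor A S) (Δ a)) = ε a • (1 : A))
    (antipode_right : ∀ a : A,
      (LinearMap.mul' ℂ A) ((LinearMap.lTensor A S) (Δ a)) = ε a • (1 : A))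
    -- the Haar state: a bi-invariant state
    (h : A →ₗ[ℂ] ℂ) (hone : h 1 = 1)
    (hpos : ∀ a : A, ∃ r : ℝ, 0 ≤ r ∧ h (star a * a) = (r : ℂ))
    (hfaithful : ∀ a : A, h (star a * a) = 0 → a = 0)
    (hinv_left : ∀ a : A,
      (TensorProduct.lid ℂ A) ((LinearMap.rTensor A h) (Δ a)) = h a • (1 : A))
    (hinv_right : ∀ a : A,
      (TensorProduct.rid ℂ A) ((LinearMap.lTensor A h) (Δ a)) = h a • (1 : A))
    -- the irreducible unitary representations
    {I : Type*} (d : I → ℕ) (hd : ∀ α, 0 < d α)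
    (U : ∀ α : I, Matrix (Fin (d α)) (Fin (d α)) A)
    (hunitary : ∀ α, U α * (U α).conjTranspose = 1 ∧ (U α).conjTranspose * U α = 1)
    (hcorep : ∀ α (i j : Fin (d α)),
      Δ (U α i j) = ∑ k : Fin (d α), U α i k ⊗ₜ[ℂ] U α k j)
    (hirred : ∀ α (T : Matrix (Fin (d α)) (Fin (d α)) ℂ),
      T.map (algebraMap ℂ A) * U α = U α * T.map (algebraMap ℂ A) →
        ∃ c : ℂ, T = c • (1 : Matrix (Fin (d α)) (Fin (d α)) ℂ))
    (hinequiv : ∀ α β, α ≠ β → ∀ T : Matrix (Fin (d α)) (Fin (d β)) ℂ,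
      U α * T.map (algebraMap ℂ A) = T.map (algebraMap ℂ A) * U β → T = 0)
    -- the normalised positive intertwiner between `U α` and its double contragredient
    (ρ : ∀ α : I, Matrix (Fin (d α)) (Fin (d α)) ℂ)
    (hρpos : ∀ α, (ρ α).PosDef)
    (hρtrace : ∀ α, (ρ α).trace = ((ρ α)⁻¹).trace)
    (hρintertwine : ∀ α,
      ((U α).map fun a => S (S a)) * (ρ α).map (algebraMap ℂ A) =
        (ρ α).map (algebraMap ℂ A) * U α) :
    (∀ α β, α ≠ β → ∀ (i k : Fin (d β)) (j l : Fin (d α)),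
        h (star (U β i k) * U α j l) = 0) ∧
    (∀ α (i k j l : Fin (d α)),
        h (star (U α i k) * U α j l) =
          (if k = l then 1 else 0) * ((ρ α)⁻¹ j i) / (ρ α).trace) :=
  schur_orthogonality_compact_quantum_group_general Δ ε counit_left S antipode_left h hone hinv_left
    hinv_right d U hunitary hcorep hirred hinequiv ρ hρpos hρtrace hρintertwine
end

section
/- Let G be a locally compact quantum group and X ⊆ M^l_{cb}(A(G)) a convex subset. If there exists a net (a_i) in X converging to 1 in the weak* topology of M^l_{cb}(A(G)), then there exists a net (b_j) in X such that (Θˡ(b_j) ⊗ id)(x) → x in norm for every x ∈ C₀(Ĝ) ⊗ K(H) and every Hilbert space H. -/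
/-!
Fix finitely many pairs (Tₖ, xₖ). The map `b ↦ ((Θˡ(b) ⊗ id)(xₖ))ₖ` sends `X` to a convex subset
of the finite product `∏ Tₖ`. Every functional on the product is a sum of functionals on the
factors, whose slices lie in `Q`; so the images of the weak* convergent net converge weakly to
`(xₖ)ₖ`. Weak and norm closures of convex sets coincide (Hahn–Banach), hence some `b ∈ X` moves
every `xₖ` by less than `ε`. Indexing these choices by (finite set, `ε = 1/(n+1)`) gives the net.
-/

open Filter Topology

universe u v

theorem WeakSpace.tendsto_of_forall_dual_tendsto {𝕜 E ι : Type*} [CommSemiring 𝕜]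
    [TopologicalSpace 𝕜] [ContinuousAdd 𝕜] [ContinuousConstSMul 𝕜 𝕜] [AddCommMonoid E]
    [Module 𝕜 E] [TopologicalSpace E] {l : Filter ι} {a : ι → E} {y : E}
    (h : ∀ f : StrongDual 𝕜 E, Tendsto (fun i => f (a i)) l (𝓝 (f y))) :
    Tendsto (fun i => toWeakSpace 𝕜 E (a i)) l (𝓝 (toWeakSpace 𝕜 E y)) :=
  (nhds_induced _ _).ge.trans' (tendsto_comap_iff.2 (tendsto_pi_nhds.2 h))

theorem Convex.mem_closure_of_forall_dual_tendsto {𝕜 E ι : Type*} [RCLike 𝕜] [AddCommGroup E]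
    [Module 𝕜 E] [Module ℝ E] [IsScalarTower ℝ 𝕜 E] [TopologicalSpace E]
    [IsTopologicalAddGroup E] [ContinuousSMul 𝕜 E] [LocallyConvexSpace ℝ E]
    {s : Set E} (hs : Convex ℝ s) {l : Filter ι} [l.NeBot] {a : ι → E} (ha : ∀ i, a i ∈ s)
    {y : E} (h : ∀ f : StrongDual 𝕜 E, Tendsto (fun i => f (a i)) l (𝓝 (f y))) :
    y ∈ closure s := by
  have hy : toWeakSpace 𝕜 E y ∈ closure (toWeakSpace 𝕜 E '' s) :=
    mem_closure_of_tendsto (WeakSpace.tendsto_of_forall_dual_tendsto h)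
      (Eventually.of_forall fun i => Set.mem_image_of_mem _ (ha i))
  rwa [← hs.toWeakSpace_closure 𝕜, (toWeakSpace 𝕜 E).injective.mem_set_image] at hy

theorem Pi.dual_tendsto_of_forall_dual_tendsto {𝕜 ι κ : Type*} [Semiring 𝕜] [TopologicalSpace 𝕜]
    [ContinuousAdd 𝕜] [Fintype ι] {T : ι → Type*} [∀ i, AddCommMonoid (T i)]
    [∀ i, Module 𝕜 (T i)] [∀ i, TopologicalSpace (T i)] {l : Filter κ} {z : κ → Π i, T i}
    {y : Π i, T i}
    (h : ∀ i (g : StrongDual 𝕜 (T i)), Tendsto (fun j => g (z j i)) l (𝓝 (g (y i))))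
    (f : StrongDual 𝕜 (Π i, T i)) : Tendsto (fun j => f (z j)) l (𝓝 (f y)) := by
  classical
  simp only [← ContinuousLinearMap.sum_comp_single 𝕜 T f]
  exact tendsto_finsetSum _ fun i _ => h i _

/-- For `a ↦ (Θˡ(a) ⊗ id)(x)` the field `exists_mem_comp` is the statement `Ω_{x,μ} ∈ Qˡ(A(G))`. -/
structure QSliceMap {M : Type u} [AddCommGroup M] [Module ℂ M] [TopologicalSpace M]
    (Q : Set (StrongDual ℂ M)) : Type (max u (v + 1)) where
  T : Type v
  [normedAddCommGroup : NormedAddCommGroup T]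
  [normedSpace : NormedSpace ℂ T]
  toLinearMap : M →ₗ[ℂ] T
  exists_mem_comp : ∀ μ : StrongDual ℂ T, ∃ q ∈ Q, ∀ a, q a = μ (toLinearMap a)

attribute [instance] QSliceMap.normedAddCommGroup QSliceMap.normedSpace

namespace QSliceMap

variable {M : Type u} [NormedAddCommGroup M] [NormedSpace ℂ M] {Q : Set (StrongDual ℂ M)}
  {one : M} {X : Set M}

theorem exists_mem_forall_dist_lt (hX : Convex ℝ X) {ι : Type*} {l : Filter ι} [l.NeBot]
    {a : ι → M} (haX : ∀ i, a i ∈ X) (ha : ∀ q ∈ Q, Tendsto (fun i => q (a i)) l (𝓝 (q one)))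
    (F : Finset (QSliceMap.{u, v} Q)) {ε : ℝ} (hε : 0 < ε) :
    ∃ b ∈ X, ∀ φ ∈ F, dist (φ.toLinearMap b) (φ.toLinearMap one) < ε := by
  let Φ : M →ₗ[ℂ] Π φ : F, φ.1.T := LinearMap.pi fun φ => φ.1.toLinearMap
  have hmem : Φ one ∈ closure (Φ '' X) := by
    refine (hX.linear_image (Φ.restrictScalars ℝ)).mem_closure_of_forall_dual_tendsto
      (𝕜 := ℂ) (l := l)
      (fun i => Set.mem_image_of_mem _ (haX i))
      (Pi.dual_tendsto_of_forall_dual_tendsto fun φ μ => ?_)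
    obtain ⟨q, hqQ, hq⟩ := φ.1.exists_mem_comp μ
    simpa only [Φ, LinearMap.coe_restrictScalars, LinearMap.pi_apply, hq] using ha q hqQ
  obtain ⟨_, ⟨b, hbX, rfl⟩, hb⟩ := Metric.mem_closure_iff.1 hmem ε hε
  refine ⟨b, hbX, fun φ hφ => ?_⟩
  calc dist (φ.toLinearMap b) (φ.toLinearMap one) ≤ dist (Φ b) (Φ one) :=
        dist_le_pi_dist (Φ b) (Φ one) ⟨φ, hφ⟩
    _ < ε := by rwa [dist_comm]

theorem exists_net_tendsto (hX : Convex ℝ X) {ι : Type*} {l : Filter ι} [l.NeBot]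
    {a : ι → M} (haX : ∀ i, a i ∈ X) (ha : ∀ q ∈ Q, Tendsto (fun i => q (a i)) l (𝓝 (q one))) :
    ∃ b : Finset (QSliceMap.{u, v} Q) × ℕ → M, (∀ j, b j ∈ X) ∧
      ∀ φ : QSliceMap.{u, v} Q, Tendsto (fun j => φ.toLinearMap (b j)) atTop
        (𝓝 (φ.toLinearMap one)) := by
  classical
  choose b hbX hb using fun p : Finset (QSliceMap.{u, v} Q) × ℕ =>
    exists_mem_forall_dist_lt hX haX ha p.1 (Nat.one_div_pos_of_nat (n := p.2))
  refine ⟨b, hbX, fun φ => Metric.tendsto_atTop.2 fun ε hε => ?_⟩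
  obtain ⟨N, hN⟩ := exists_nat_one_div_lt hε
  refine ⟨({φ}, N), fun p hp => ?_⟩
  calc dist (φ.toLinearMap (b p)) (φ.toLinearMap one) < 1 / (p.2 + 1) :=
        hb p φ (Finset.singleton_subset_iff.1 hp.1)
    _ ≤ 1 / (N + 1) := Nat.one_div_le_one_div hp.2
    _ < ε := hN

end QSliceMap

/-- Let `G` be a locally compact quantum group and
`X ⊆ M^l_{cb}(A(G))` a convex subset.  If there is a net `(a_i)` in `X` converging to the
unit multiplier `1` in the weak* topology of `M^l_{cb}(A(G))` (i.e. pointwise against every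
element of the predual `Q = Qˡ(A(G)) ⊆ M^l_{cb}(A(G))*`), then there is a net `(b_j)` in
`X` such that `(Θˡ(b_j) ⊗ id)(x) → x` in norm for every `x ∈ C₀(Ĝ) ⊗ K(H)` and every
Hilbert space `H`.  Here the spaces `C₀(Ĝ) ⊗ K(H)` are abstracted as the Banach spaces `T`
equipped with an amplification `amp : a ↦ Θˡ(a) ⊗ id` such that every slice functional
`a ↦ ⟨μ, (Θˡ(a) ⊗ id)(x)⟩` belongs to `Q` (Statement 16). -/
theorem weak_star_approx_implies_norm_approx_on_amplifications
    {Mcb : Type u} [NormedAddCommGroup Mcb] [NormedSpace ℂ Mcb]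
    (Q : Set (Mcb →L[ℂ] ℂ))
    (one : Mcb)
    (X : Set Mcb) (hX : Convex ℝ X)
    (hnet : ∃ (ιt : Type u) (l : Filter ιt) (a : ιt → Mcb), l.NeBot ∧
      (∀ i, a i ∈ X) ∧
      ∀ q ∈ Q, Tendsto (fun i => q (a i)) l (nhds (q one))) :
    ∃ (κ : Type (max u (v + 1))) (m : Filter κ) (b : κ → Mcb), m.NeBot ∧
      (∀ j, b j ∈ X) ∧
      ∀ (T : Type v) [NormedAddCommGroup T] [NormedSpace ℂ T]
        (amp : Mcb →ₗ[ℂ] (T →L[ℂ] T)),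
        (∀ a, ‖amp a‖ ≤ ‖a‖) →
        amp one = ContinuousLinearMap.id ℂ T →
        (∀ (x : T) (μ : T →L[ℂ] ℂ), ∃ q ∈ Q, ∀ a, q a = μ ((amp a) x)) →
        ∀ x : T, Tendsto (fun j => amp (b j) x) m (nhds x) := by
  obtain ⟨ι, l, a, hl, haX, ha⟩ := hnet
  obtain ⟨b, hbX, hb⟩ := QSliceMap.exists_net_tendsto.{u, v} hX haX ha
  classical
  refine ⟨_, atTop, b, atTop_neBot, hbX, fun T _ _ amp _ hone hQ x => ?_⟩
  let φ : QSliceMap.{u, v} Q := ⟨T, (ContinuousLinearMap.apply ℂ T x).toLinearMap ∘ₗ amp, hQ x⟩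
  simpa [φ, hone] using hb φ
end
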